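/- arXiv:1910.01883 — 4 statements merged into one kernel-verified Lean document; each statement's English description precedes it below -/
import Mathlib

section
/- Let γ ∈ (−2,0), ν ∈ (0,2), and let β satisfy assumption (H). Then for all v, v_* ∈ ℝ³ with v ≠ v_*: ∫₀^∞ ∫₀^{2π} |c_{γ,ν}(v,v_*,z,φ)|² dφ dz = β₀ |v−v_*|^{γ+2}. -/
open MeasureTheory ENNReal

noncomputable section

/-- `ℝ^d` as a Euclidean space. -/
abbrev Euc (d : ℕ) := EuclideanSpace ℝ (Fin d)

/-- Japanese bracket `⟨x⟩ = √(1+|x|²)`. -/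
def jap {d : ℕ} (x : Euc d) : ℝ := Real.sqrt (1 + ‖x‖^2)

/-- Fractional Sobolev seminorm squared `|f|²_{H^s(ℝ^d)}`, valued in `[0,∞]`. -/
def fracSobolevSq (d : ℕ) (s : ℝ) (f : Euc d → ℝ) : ℝ≥0∞ :=
  ∫⁻ x : Euc d, ∫⁻ y : Euc d, ENNReal.ofReal ((f x - f y)^2 / ‖x - y‖ ^ ((d : ℝ) + 2*s))

/-- Weighted normalized fractional Fisher information `I^N_{ν,γ}`, valued in `[0,∞]`. -/
def fisherInfo (d N : ℕ) (ν γ : ℝ) (G : (Fin N → Euc d) → ℝ) : ℝ≥0∞ :=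
  (N : ℝ≥0∞)⁻¹ * ∑ i : Fin N, ∫⁻ V : Fin N → Euc d, ∫⁻ w : Euc d,
    ENNReal.ofReal ((jap (V i) ^ (γ/2) * Real.sqrt (G V)
      - jap w ^ (γ/2) * Real.sqrt (G (Function.update V i w)))^2
      / ‖V i - w‖ ^ ((d : ℝ) + ν))

/-- A probability density: measurable, nonnegative, total mass one. -/
def IsProbDensity {α : Type*} [MeasureSpace α] (f : α → ℝ) : Prop :=
  Measurable f ∧ (∀ x, 0 ≤ f x) ∧ ∫⁻ x, ENNReal.ofReal (f x) = 1

/-- A symmetric (exchangeable) probability density on `(ℝ^d)^N`. -/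
def IsSymDensity (d N : ℕ) (F : (Fin N → Euc d) → ℝ) : Prop :=
  IsProbDensity F ∧ ∀ (σ : Equiv.Perm (Fin N)) (V : Fin N → Euc d), F (V ∘ σ) = F V

/-- Assumption (H) on the angular function `β`. -/
def AssumptionH (β : ℝ → ℝ) (ν K₁ K₂ : ℝ) : Prop :=
  Measurable β ∧ 0 < K₂ ∧ K₂ < K₁ ∧ (∀ θ ∈ Set.Ioc (0 : ℝ) Real.pi, 0 ≤ β θ) ∧
  ∀ θ ∈ Set.Ioc (0 : ℝ) Real.pi, K₂ * θ ^ (-1 - ν) ≤ β θ ∧ β θ ≤ K₁ * θ ^ (-1 - ν)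

/-- `β₀ = π ∫₀^π (1-cos θ) β(θ) dθ`. -/
def betaZero (β : ℝ → ℝ) : ℝ := Real.pi * ∫ θ in (0 : ℝ)..Real.pi, (1 - Real.cos θ) * β θ

/-- `G_ν(z) = inf{x ∈ (0,π] : ∫_x^π β ≤ z}`. -/
def Gnu (β : ℝ → ℝ) (z : ℝ) : ℝ :=
  sInf {x : ℝ | x ∈ Set.Ioc 0 Real.pi ∧ (∫ θ in x..Real.pi, β θ) ≤ z}

/-- Cross product on `ℝ³` (Euclidean). -/
def cross3 (x y : Euc 3) : Euc 3 :=
  (WithLp.equiv 2 (Fin 3 → ℝ)).symm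
    ![x 1 * y 2 - x 2 * y 1, x 2 * y 0 - x 0 * y 2, x 0 * y 1 - x 1 * y 0]

/-- The frame functions `I, J`: measurable, with `|I(X)| = |J(X)| = |X|` and
`(X/|X|, I(X)/|X|, J(X)/|X|)` a direct orthonormal basis, for every `X ≠ 0`. -/
def IsFrame (I J : Euc 3 → Euc 3) : Prop :=
  Measurable I ∧ Measurable J ∧
  ∀ X : Euc 3, X ≠ 0 →
    ‖I X‖ = ‖X‖ ∧ ‖J X‖ = ‖X‖ ∧
    (inner ℝ X (I X) : ℝ) = 0 ∧ (inner ℝ X (J X) : ℝ) = 0 ∧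
    (inner ℝ (I X) (J X) : ℝ) = 0 ∧ cross3 X (I X) = ‖X‖ • J X

/-- `Γ(X,φ) = cos(φ) I(X) + sin(φ) J(X)`. -/
def GammaFrame (I J : Euc 3 → Euc 3) (X : Euc 3) (φ : ℝ) : Euc 3 :=
  Real.cos φ • I X + Real.sin φ • J X

/-- `a(v,v₊,θ,φ) = -((1-cos θ)/2)(v-v₊) + (sin θ/2) Γ(v-v₊,φ)`. -/
def aColl (I J : Euc 3 → Euc 3) (v vs : Euc 3) (θ φ : ℝ) : Euc 3 :=
  (-((1 - Real.cos θ)/2)) • (v - vs) + (Real.sin θ / 2) • GammaFrame I J (v - vs) φ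

/-- `c_{γ,ν}(v,v₊,z,φ) = a(v,v₊,G_ν(z/|v-v₊|^γ),φ)`. -/
def cColl (I J : Euc 3 → Euc 3) (β : ℝ → ℝ) (γ : ℝ) (v vs : Euc 3) (z φ : ℝ) : Euc 3 :=
  aColl I J v vs (Gnu β (z / ‖v - vs‖ ^ γ)) φ

/-- `K_γ(x) = |x|^γ x`. -/
def Kgam (γ : ℝ) (x : Euc 3) : Euc 3 := ‖x‖ ^ γ • x

/-- `Δ̃f(v,v₊,z,φ) = f(v+c) - f(v) - c·∇f(v)` with `c = c_{γ,ν}(v,v₊,z,φ)`. -/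
def tDelta (I J : Euc 3 → Euc 3) (β : ℝ → ℝ) (γ : ℝ) (f : Euc 3 → ℝ)
    (v vs : Euc 3) (z φ : ℝ) : ℝ :=
  f (v + cColl I J β γ v vs z φ) - f v
    - (inner ℝ (cColl I J β γ v vs z φ) (gradient f v) : ℝ)

/-!
For `X = v - v_*` the vectors `X`, `I(X)`, `J(X)` are orthogonal of equal length, so
`|a(v,v_*,θ,φ)|² = |X|² (1 - cos θ) / 2` for every `φ`, and the substitution
`z = |X|^γ u` reduces the claim to `∫₀^∞ (1 - cos G_ν(u)) du = ∫₀^π (1 - cos θ) β(θ) dθ`.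
As `β > 0`, `A(t) = ∫_t^π β` is continuous and strictly decreasing on `(0, π]`, and `G_ν` is its
inverse in the sense that `t ≤ G_ν(u) ↔ u ≤ A(t)`. The layer cake formula with the density
`max (sin t) 0` (whose primitive is `1 - cos` on `[0, π]`) turns both integrals into
`∫₀^π sin t · A(t) dt`: on the left through this equivalence, on the right because
`{θ : t < θ}` has `β dθ`-mass `A(t)`.
-/

open Set Real

theorem gnu_nonneg (β : ℝ → ℝ) (z : ℝ) : 0 ≤ Gnu β z :=
  Real.sInf_nonneg fun _ hx => hx.1.1.le

theorem gnu_le_pi (β : ℝ → ℝ) {z : ℝ} (hz : 0 ≤ z) : Gnu β z ≤ π :=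
  csInf_le ⟨0, fun _ hx => hx.1.1.le⟩ ⟨⟨pi_pos, le_rfl⟩, by simpa using hz⟩

theorem antitoneOn_gnu (β : ℝ → ℝ) : AntitoneOn (Gnu β) (Ici 0) := fun a ha _ _ hab =>
  csInf_le_csInf ⟨0, fun _ hx => hx.1.1.le⟩ ⟨π, ⟨pi_pos, le_rfl⟩, by simpa using ha⟩
    fun _ hx => ⟨hx.1, hx.2.trans hab⟩

theorem integral_max_sin_zero {a : ℝ} (ha : 0 ≤ a) (haπ : a ≤ π) :
    ∫ t in (0 : ℝ)..a, max (sin t) 0 = 1 - cos a := by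
  rw [← cos_zero, ← integral_sin]
  refine intervalIntegral.integral_congr fun t ht => max_eq_left ?_
  rw [uIcc_of_le ha] at ht
  exact sin_nonneg_of_nonneg_of_le_pi ht.1 (ht.2.trans haπ)

theorem norm_aColl_sq {I J : Euc 3 → Euc 3} (hIJ : IsFrame I J) {v vs : Euc 3} (h : v - vs ≠ 0)
    (θ φ : ℝ) : ‖aColl I J v vs θ φ‖ ^ 2 = ‖v - vs‖ ^ 2 * ((1 - cos θ) / 2) := by
  obtain ⟨hI, hJ, hXI, hXJ, hIJ0, -⟩ := hIJ.2.2 (v - vs) h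
  have hXΓ : inner ℝ (v - vs) (GammaFrame I J (v - vs) φ) = 0 := by
    rw [GammaFrame, inner_add_right, real_inner_smul_right, real_inner_smul_right, hXI, hXJ]
    ring
  have hΓ : ‖GammaFrame I J (v - vs) φ‖ ^ 2 = ‖v - vs‖ ^ 2 := by
    rw [GammaFrame, norm_add_sq_real, real_inner_smul_left, real_inner_smul_right, hIJ0,
      norm_smul, norm_smul, norm_eq_abs, norm_eq_abs, hI, hJ, mul_pow, mul_pow, sq_abs, sq_abs]
    linear_combination ‖v - vs‖ ^ 2 * sin_sq_add_cos_sq φ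
  rw [aColl, norm_add_sq_real, real_inner_smul_left, real_inner_smul_right, hXΓ, norm_smul,
    norm_smul, norm_eq_abs, norm_eq_abs, mul_pow, mul_pow, sq_abs, sq_abs, hΓ]
  linear_combination ‖v - vs‖ ^ 2 / 4 * sin_sq_add_cos_sq θ

namespace AssumptionH

variable {β : ℝ → ℝ} {ν K₁ K₂ : ℝ}

theorem nonneg (hβ : AssumptionH β ν K₁ K₂) {θ : ℝ} (hθ : θ ∈ Ioc 0 π) : 0 ≤ β θ :=
  hβ.2.2.2.1 θ hθ

theorem pos (hβ : AssumptionH β ν K₁ K₂) {θ : ℝ} (hθ : θ ∈ Ioc 0 π) : 0 < β θ :=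
  (mul_pos hβ.2.1 (rpow_pos_of_pos hθ.1 _)).trans_le (hβ.2.2.2.2 θ hθ).1

theorem integrableOn_Icc (hβ : AssumptionH β ν K₁ K₂) {s : ℝ} (hs : 0 < s) :
    IntegrableOn β (Icc s π) := by
  have hbound : ContinuousOn (fun θ => K₁ * θ ^ (-1 - ν)) (Icc s π) := fun θ hθ =>
    (continuousAt_const.mul
      (continuousAt_rpow_const _ _ (Or.inl (hs.trans_le hθ.1).ne'))).continuousWithinAt
  refine (hbound.integrableOn_Icc).mono' hβ.1.aestronglyMeasurable
    ((ae_restrict_iff' measurableSet_Icc).2 (ae_of_all _ fun θ hθ => ?_))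
  have hθ' : θ ∈ Ioc 0 π := ⟨hs.trans_le hθ.1, hθ.2⟩
  rw [norm_of_nonneg (hβ.nonneg hθ')]
  exact (hβ.2.2.2.2 θ hθ').2

theorem intervalIntegrable (hβ : AssumptionH β ν K₁ K₂) {s t : ℝ} (hs : 0 < s) (hst : s ≤ t)
    (ht : t ≤ π) : IntervalIntegrable β volume s t :=
  (intervalIntegrable_iff_integrableOn_Icc_of_le hst).2
    ((hβ.integrableOn_Icc hs).mono_set (Icc_subset_Icc_right ht))

theorem integral_lt_integral (hβ : AssumptionH β ν K₁ K₂) {x t : ℝ} (hx : 0 < x) (hxt : x < t)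
    (ht : t ≤ π) : ∫ θ in t..π, β θ < ∫ θ in x..π, β θ := by
  rw [← intervalIntegral.integral_add_adjacent_intervals (hβ.intervalIntegrable hx hxt.le ht)
    (hβ.intervalIntegrable (hx.trans hxt) ht le_rfl), lt_add_iff_pos_left]
  exact intervalIntegral.intervalIntegral_pos_of_pos_on (hβ.intervalIntegrable hx hxt.le ht)
    (fun θ hθ => hβ.pos ⟨hx.trans hθ.1, hθ.2.le.trans ht⟩) hxt

theorem continuousWithinAt_integral (hβ : AssumptionH β ν K₁ K₂) {t : ℝ} (ht : t ∈ Ioc 0 π) :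
    ContinuousWithinAt (fun x => ∫ θ in x..π, β θ) (Iio t) t := by
  have hle : t / 2 ≤ π := by linarith [ht.1, ht.2]
  have hcont := intervalIntegral.continuousOn_primitive_interval_left
    (uIcc_of_le hle ▸ hβ.integrableOn_Icc (half_pos ht.1))
  rw [uIcc_of_le hle] at hcont
  refine (hcont t ⟨by linarith [ht.1], ht.2⟩).mono_of_mem_nhdsWithin
    (Filter.mem_of_superset (Ioo_mem_nhdsLT (half_lt_self ht.1)) fun x hx => ⟨hx.1.le, ?_⟩)
  linarith [hx.2, ht.2]

theorem le_gnu_iff (hβ : AssumptionH β ν K₁ K₂) {u t : ℝ} (hu : 0 < u) (ht : t ∈ Ioc 0 π) :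
    t ≤ Gnu β u ↔ u ≤ ∫ θ in t..π, β θ := by
  constructor
  · intro htG
    by_contra! hlt
    obtain ⟨x, hxu, hx⟩ := (((hβ.continuousWithinAt_integral ht).eventually (gt_mem_nhds hlt)).and
      (Ioo_mem_nhdsLT (half_lt_self ht.1))).exists
    have hx0 : 0 < x := (half_pos ht.1).trans hx.1
    have hGx : Gnu β u ≤ x := csInf_le ⟨0, fun y hy => hy.1.1.le⟩
      ⟨⟨hx0, hx.2.le.trans ht.2⟩, hxu.le⟩
    linarith [hx.2]
  · intro hut
    refine le_csInf ⟨π, ⟨pi_pos, le_rfl⟩, by simpa using hu.le⟩ fun x ⟨hx, hxu⟩ => ?_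
    by_contra! hxt
    linarith [hβ.integral_lt_integral hx.1 hxt ht.2]

theorem ofReal_integral_eq_lintegral (hβ : AssumptionH β ν K₁ K₂) {t : ℝ} (ht : 0 < t)
    (htπ : t ≤ π) :
    ENNReal.ofReal (∫ θ in t..π, β θ) = ∫⁻ θ in Ioc t π, ENNReal.ofReal (β θ) := by
  rw [intervalIntegral.integral_of_le htπ, ofReal_integral_eq_lintegral_ofReal
    ((hβ.integrableOn_Icc ht).mono_set Ioc_subset_Icc_self)]
  exact (ae_restrict_iff' measurableSet_Ioc).2
    (ae_of_all _ fun θ hθ => hβ.nonneg ⟨ht.trans hθ.1, hθ.2⟩)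

theorem volume_le_gnu_div (hβ : AssumptionH β ν K₁ K₂) {c t : ℝ} (hc : 0 < c) (ht : 0 < t) :
    volume.restrict (Ioi 0) {z | t ≤ Gnu β (z / c)}
      = ENNReal.ofReal c * ∫⁻ θ in Ioc t π, ENNReal.ofReal (β θ) := by
  rw [Measure.restrict_apply' measurableSet_Ioi]
  rcases le_or_gt t π with htπ | hπt
  · have hset : {z | t ≤ Gnu β (z / c)} ∩ Ioi 0 = Ioc 0 (c * ∫ θ in t..π, β θ) := by
      ext z
      simp only [mem_inter_iff, mem_ofPred_eq, mem_Ioi, mem_Ioc]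
      constructor
      · rintro ⟨htG, hz⟩
        refine ⟨hz, ?_⟩
        rw [← div_le_iff₀' hc]
        exact (hβ.le_gnu_iff (div_pos hz hc) ⟨ht, htπ⟩).1 htG
      · rintro ⟨hz, hzc⟩
        refine ⟨(hβ.le_gnu_iff (div_pos hz hc) ⟨ht, htπ⟩).2 ?_, hz⟩
        rwa [div_le_iff₀' hc]
    rw [hset, Real.volume_Ioc, sub_zero, ENNReal.ofReal_mul hc.le,
      hβ.ofReal_integral_eq_lintegral ht htπ]
  · have hset : {z | t ≤ Gnu β (z / c)} ∩ Ioi 0 = ∅ := by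
      refine eq_empty_of_forall_notMem fun z ⟨htG, hz⟩ => ?_
      linarith [gnu_le_pi β (div_pos (mem_Ioi.1 hz) hc).le, mem_ofPred_eq ▸ htG]
    rw [hset, Ioc_eq_empty_of_le hπt.le, Measure.restrict_empty, lintegral_zero_measure,
      mul_zero, measure_empty]

theorem lintegral_one_sub_cos_gnu_div_eq_layercake (hβ : AssumptionH β ν K₁ K₂) {c : ℝ}
    (hc : 0 < c) :
    ∫⁻ z in Ioi 0, ENNReal.ofReal (1 - cos (Gnu β (z / c)))
      = ∫⁻ t in Ioi 0, ENNReal.ofReal c * (∫⁻ θ in Ioc t π, ENNReal.ofReal (β θ))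
          * ENNReal.ofReal (max (sin t) 0) := calc
  _ = ∫⁻ z in Ioi 0, ENNReal.ofReal (∫ t in (0 : ℝ)..Gnu β (z / c), max (sin t) 0) :=
    setLIntegral_congr_fun measurableSet_Ioi fun z hz => by
      rw [integral_max_sin_zero (gnu_nonneg _ _) (gnu_le_pi β (div_pos hz hc).le)]
  _ = ∫⁻ t in Ioi 0, volume.restrict (Ioi 0) {z | t ≤ Gnu β (z / c)}
        * ENNReal.ofReal (max (sin t) 0) :=
    lintegral_comp_eq_lintegral_meas_le_mul _ (ae_of_all _ fun _ => gnu_nonneg _ _)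
      (aemeasurable_restrict_of_antitoneOn measurableSet_Ioi fun x hx y _ hxy =>
        antitoneOn_gnu β (div_pos hx hc).le (div_pos (lt_of_lt_of_le hx hxy) hc).le
          (div_le_div_of_nonneg_right hxy hc.le))
      (fun _ _ => (continuous_sin.max continuous_const).intervalIntegrable _ _)
      (ae_of_all _ fun _ => le_max_right _ _)
  _ = _ := setLIntegral_congr_fun measurableSet_Ioi fun t ht => by
    rw [hβ.volume_le_gnu_div hc ht]

theorem lintegral_one_sub_cos_mul_eq_layercake (hβ : AssumptionH β ν K₁ K₂) :
    ∫⁻ θ in Ioc 0 π, ENNReal.ofReal ((1 - cos θ) * β θ)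
      = ∫⁻ t in Ioi 0, (∫⁻ θ in Ioc t π, ENNReal.ofReal (β θ))
          * ENNReal.ofReal (max (sin t) 0) := by
  have hg : Continuous fun t => max (sin t) 0 := continuous_sin.max continuous_const
  set μ := (volume.restrict (Ioc 0 π)).withDensity fun θ => ENNReal.ofReal (β θ)
  calc _ = ∫⁻ θ, ENNReal.ofReal (∫ t in (0 : ℝ)..θ, max (sin t) 0) ∂μ := by
        rw [lintegral_withDensity_eq_lintegral_mul _ hβ.1.ennreal_ofReal
          (intervalIntegral.continuous_primitive (fun _ _ => hg.intervalIntegrable _ _)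
            0).measurable.ennreal_ofReal]
        refine setLIntegral_congr_fun measurableSet_Ioc fun θ hθ => ?_
        rw [Pi.mul_apply, integral_max_sin_zero hθ.1.le hθ.2,
          ← ENNReal.ofReal_mul (hβ.nonneg hθ), mul_comm]
    _ = ∫⁻ t in Ioi 0, μ (Ioi t) * ENNReal.ofReal (max (sin t) 0) :=
      lintegral_comp_eq_lintegral_meas_lt_mul μ
        (Filter.Eventually.mono ((withDensity_absolutelyContinuous _ _).ae_le
          (ae_restrict_mem measurableSet_Ioc)) fun θ hθ => hθ.1.le)
        aemeasurable_id (fun _ _ => hg.intervalIntegrable _ _)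
        (ae_of_all _ fun _ => le_max_right _ _)
    _ = _ := setLIntegral_congr_fun measurableSet_Ioi fun t ht => by
      rw [withDensity_apply _ measurableSet_Ioi, Measure.restrict_restrict measurableSet_Ioi,
        inter_comm, Ioc_inter_Ioi, max_eq_right (le_of_lt ht)]

theorem lintegral_one_sub_cos_gnu_div (hβ : AssumptionH β ν K₁ K₂) {c : ℝ} (hc : 0 < c) :
    ∫⁻ z in Ioi 0, ENNReal.ofReal (1 - cos (Gnu β (z / c)))
      = ENNReal.ofReal c * ∫⁻ θ in Ioc 0 π, ENNReal.ofReal ((1 - cos θ) * β θ) := by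
  rw [hβ.lintegral_one_sub_cos_gnu_div_eq_layercake hc, hβ.lintegral_one_sub_cos_mul_eq_layercake,
    ← lintegral_const_mul' _ _ ENNReal.ofReal_ne_top]
  simp only [mul_assoc]

theorem one_sub_cos_mul_nonneg (hβ : AssumptionH β ν K₁ K₂) {θ : ℝ} (hθ : θ ∈ Ioc 0 π) :
    0 ≤ (1 - cos θ) * β θ :=
  mul_nonneg (sub_nonneg.2 (cos_le_one θ)) (hβ.nonneg hθ)

theorem integrableOn_one_sub_cos_mul (hβ : AssumptionH β ν K₁ K₂) (hν : ν < 2) :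
    IntegrableOn (fun θ => (1 - cos θ) * β θ) (Ioc 0 π) := by
  have hdom : IntegrableOn (fun θ : ℝ => K₁ / 2 * θ ^ (1 - ν)) (Ioc 0 π) :=
    ((intervalIntegrable_iff_integrableOn_Ioc_of_le pi_pos.le).1
      (intervalIntegral.intervalIntegrable_rpow' (by linarith))).const_mul _
  refine hdom.mono'
    ((continuous_const.sub continuous_cos).measurable.mul hβ.1).aestronglyMeasurable
    ((ae_restrict_iff' measurableSet_Ioc).2 (ae_of_all _ fun θ hθ => ?_))
  have hcos : 1 - cos θ ≤ θ ^ 2 / 2 := by linarith [one_sub_sq_div_two_le_cos (x := θ)]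
  rw [norm_of_nonneg (hβ.one_sub_cos_mul_nonneg hθ)]
  calc (1 - cos θ) * β θ ≤ θ ^ 2 / 2 * (K₁ * θ ^ (-1 - ν)) :=
        mul_le_mul hcos (hβ.2.2.2.2 θ hθ).2 (hβ.nonneg hθ) (by positivity)
    _ = K₁ / 2 * (θ ^ (2 : ℝ) * θ ^ (-1 - ν)) := by rw [Real.rpow_two]; ring
    _ = K₁ / 2 * θ ^ (1 - ν) := by rw [← rpow_add hθ.1]; ring_nf

end AssumptionH

theorem stmt_5_general (γ ν K₁ K₂ : ℝ) (hν : ν ∈ Set.Ioo (0 : ℝ) 2)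
    (β : ℝ → ℝ) (hβ : AssumptionH β ν K₁ K₂)
    (I J : Euc 3 → Euc 3) (hIJ : IsFrame I J)
    (v vs : Euc 3) (hvvs : v ≠ vs) :
    (∫⁻ z in Set.Ioi (0 : ℝ), ∫⁻ φ in Set.Ioc (0 : ℝ) (2*Real.pi),
        ENNReal.ofReal (‖cColl I J β γ v vs z φ‖^2))
      = ENNReal.ofReal (betaZero β * ‖v - vs‖ ^ (γ + 2)) := by
  have hr : 0 < ‖v - vs‖ := norm_pos_iff.2 (sub_ne_zero.2 hvvs)
  have hc : 0 < ‖v - vs‖ ^ γ := rpow_pos_of_pos hr γ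
  have hφ (z : ℝ) : ∫⁻ φ in Ioc 0 (2 * π), ENNReal.ofReal (‖cColl I J β γ v vs z φ‖ ^ 2)
      = ENNReal.ofReal (π * ‖v - vs‖ ^ 2)
          * ENNReal.ofReal (1 - cos (Gnu β (z / ‖v - vs‖ ^ γ))) := by
    simp only [cColl, norm_aColl_sq hIJ (sub_ne_zero.2 hvvs)]
    rw [setLIntegral_const, Real.volume_Ioc, sub_zero,
      ← ENNReal.ofReal_mul (by nlinarith [cos_le_one (Gnu β (z / ‖v - vs‖ ^ γ))]),
      ← ENNReal.ofReal_mul (by positivity)]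
    congr 1
    ring
  simp only [hφ]
  rw [lintegral_const_mul' _ _ ENNReal.ofReal_ne_top, hβ.lintegral_one_sub_cos_gnu_div hc,
    ← ofReal_integral_eq_lintegral_ofReal (hβ.integrableOn_one_sub_cos_mul hν.2)
      ((ae_restrict_iff' measurableSet_Ioc).2 (ae_of_all _ fun _ => hβ.one_sub_cos_mul_nonneg)),
    ← intervalIntegral.integral_of_le pi_pos.le, ← ENNReal.ofReal_mul hc.le,
    ← ENNReal.ofReal_mul (by positivity), betaZero, rpow_add hr, Real.rpow_two]
  congr 1
  ring

/-- for `v ≠ v₊`,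
`∫₀^∞ ∫₀^{2π} |c_{γ,ν}(v,v₊,z,φ)|² dφ dz = β₀ |v-v₊|^{γ+2}`. -/
theorem stmt_5 (γ ν K₁ K₂ : ℝ) (hγ : γ ∈ Set.Ioo (-2 : ℝ) 0) (hν : ν ∈ Set.Ioo (0 : ℝ) 2)
    (β : ℝ → ℝ) (hβ : AssumptionH β ν K₁ K₂)
    (I J : Euc 3 → Euc 3) (hIJ : IsFrame I J)
    (v vs : Euc 3) (hvvs : v ≠ vs) :
    (∫⁻ z in Set.Ioi (0 : ℝ), ∫⁻ φ in Set.Ioc (0 : ℝ) (2*Real.pi),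
        ENNReal.ofReal (‖cColl I J β γ v vs z φ‖^2))
      = ENNReal.ofReal (betaZero β * ‖v - vs‖ ^ (γ + 2)) :=
  stmt_5_general γ ν K₁ K₂ hν β hβ I J hIJ v vs hvvs

end
end

section
/- Let R > 1 and δ, η ∈ (0,1). There exists a constant C = C(R,δ,η) > 0, depending also on the Lipschitz constants of the chosen cutoff functions χ_{η²/2}, χ_{4η}, χ_R, χ_{2δ}, χ_{R−1}, such that for all probability measures f, g on ℝ³ with finite first moment: |α^R_{δ,η}(f) − α^R_{δ,η}(g)| ≤ C W₁(f,g). -/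
open MeasureTheory ENNReal

noncomputable section

/-- A cutoff function at level `A`: Lipschitz, `[0,1]`-valued on `[0,∞)`, with
`1_{[0,A]} ≤ χ_A ≤ 1_{[0,A+min(1,A)]}`. -/
def IsCutoff (A : ℝ) (χA : ℝ → ℝ) : Prop :=
  (∃ K : NNReal, LipschitzWith K χA) ∧
  (∀ x : ℝ, 0 ≤ x → 0 ≤ χA x ∧ χA x ≤ 1) ∧
  (∀ x : ℝ, 0 ≤ x → x ≤ A → χA x = 1) ∧
  (∀ x : ℝ, A + min 1 A < x → χA x = 0)

/-- The smooth cutoff functional `α^R_{δ,η}` on probability measures on `ℝ³`,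
built from a cutoff family `χ`. -/
def alphaCut (χ : ℝ → ℝ → ℝ) (R δ η : ℝ) (g : Measure (Euc 3)) : ℝ :=
  (1 - χ (η^2/2) (⨆ e : Metric.sphere (0 : Euc 3) 1,
      ∫ v, ∫ vs, χ R ‖v‖ * χ R ‖vs‖ * χ (2*δ) |(inner ℝ (v - vs) (e : Euc 3) : ℝ)| ∂g ∂g))
    + χ (4*η) (∫ v, χ (R-1) ‖v‖ ∂g)

/-- Wasserstein-1 distance via Kantorovich–Rubinstein duality. -/
def W1 {d : ℕ} (f g : Measure (Euc d)) : ℝ :=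
  sSup {t : ℝ | ∃ φ : Euc d → ℝ, LipschitzWith 1 φ ∧
    t = (∫ x, φ x ∂f) - ∫ x, φ x ∂g}

/-!
Each ingredient of `α` is a Lipschitz cutoff applied to the integral of a test function against
`g` or `g ⊗ g`, and the duality defining `W1` gives `|∫ φ df - ∫ φ dg| ≤ Lip(φ) W1(f, g)`.
The integrand `χ_R(|v|) χ_R(|v_*|) χ_{2δ}(|(v - v_*)·e|)` is a product of `[0,1]`-valued Lipschitz
factors, hence Lipschitz in each variable uniformly in `e`. Replacing `f ⊗ f` by `g ⊗ g` one factor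
at a time, and using `|sup F - sup G| ≤ sup |F - G|`, bounds the first term by `2 Lip W1(f, g)`.
-/

open scoped NNReal RealInnerProductSpace

theorem LipschitzWith.mul_of_abs_le_one {X : Type*} [PseudoMetricSpace X] {f g : X → ℝ}
    {Kf Kg : ℝ≥0} (hf : LipschitzWith Kf f) (hg : LipschitzWith Kg g)
    (hf₁ : ∀ x, |f x| ≤ 1) (hg₁ : ∀ x, |g x| ≤ 1) :
    LipschitzWith (Kf + Kg) fun x => f x * g x := by
  refine LipschitzWith.of_dist_le_mul fun x y => ?_
  have hfd := hf.dist_le_mul x y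
  have hgd := hg.dist_le_mul x y
  rw [Real.dist_eq] at hfd hgd ⊢
  calc |f x * g x - f y * g y| = |(f x - f y) * g x + f y * (g x - g y)| := by ring_nf
    _ ≤ |f x - f y| * |g x| + |f y| * |g x - g y| := by
      rw [← abs_mul, ← abs_mul]; exact abs_add_le _ _
    _ ≤ |f x - f y| * 1 + 1 * |g x - g y| := by
      gcongr
      exacts [hg₁ x, hf₁ y]
    _ ≤ (Kf + Kg : ℝ≥0) * dist x y := by push_cast; linarith

theorem lipschitzWith_integral {X Y : Type*} [PseudoMetricSpace X] [MeasurableSpace Y]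
    {μ : Measure Y} [IsProbabilityMeasure μ] {h : X → Y → ℝ} {K : ℝ≥0}
    (hint : ∀ x, Integrable (h x) μ) (hlip : ∀ y, LipschitzWith K fun x => h x y) :
    LipschitzWith K fun x => ∫ y, h x y ∂μ := by
  refine LipschitzWith.of_dist_le_mul fun x x' => ?_
  rw [dist_eq_norm, ← integral_sub (hint x) (hint x')]
  simpa using norm_integral_le_of_norm_le_const (μ := μ)
    (Filter.Eventually.of_forall fun y =>
      (dist_eq_norm _ _).symm.trans_le ((hlip y).dist_le_mul x x'))

theorem LipschitzWith.integrable_of_integrable_norm {E : Type*} [NormedAddCommGroup E]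
    [MeasurableSpace E] [OpensMeasurableSpace E] {μ : Measure E} [IsFiniteMeasure μ]
    {φ : E → ℝ} {K : ℝ≥0} (hφ : LipschitzWith K φ) (hμ : Integrable (fun x => ‖x‖) μ) :
    Integrable φ μ := by
  refine ((integrable_const |φ 0|).add (hμ.const_mul K)).mono' hφ.continuous.aestronglyMeasurable
    (Filter.Eventually.of_forall fun x => ?_)
  have := hφ.dist_le_mul x 0
  rw [Real.dist_eq, dist_zero_right] at this
  simp only [Pi.add_apply, Real.norm_eq_abs]
  linarith [abs_sub_abs_le_abs_sub (φ x) (φ 0)]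

theorem abs_ciSup_sub_ciSup_le {ι : Type*} [Nonempty ι] {F G : ι → ℝ} {c : ℝ}
    (h : ∀ i, |F i - G i| ≤ c) : |(⨆ i, F i) - ⨆ i, G i| ≤ c := by
  have transfer : ∀ {F G : ι → ℝ}, (∀ i, |F i - G i| ≤ c) →
      BddAbove (Set.range G) → ∀ i, F i ≤ (⨆ i, G i) + c := fun h hG i => by
    linarith [le_ciSup hG i, (abs_le.mp (h i)).2]
  have h' : ∀ i, |G i - F i| ≤ c := fun i => abs_sub_comm (F i) (G i) ▸ h i
  by_cases hG : BddAbove (Set.range G)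
  · have hF : BddAbove (Set.range F) := ⟨(⨆ i, G i) + c, by
      rintro _ ⟨i, rfl⟩; exact transfer h hG i⟩
    rw [abs_sub_le_iff]
    constructor
    · linarith [ciSup_le (transfer h hG)]
    · linarith [ciSup_le (transfer h' hF)]
  · have hF : ¬BddAbove (Set.range F) := fun hF => hG ⟨(⨆ i, F i) + c, by
      rintro _ ⟨i, rfl⟩; exact transfer h' hF i⟩
    rw [Real.iSup_of_not_bddAbove hF, Real.iSup_of_not_bddAbove hG, sub_self, abs_zero]
    exact (abs_nonneg _).trans (h (Classical.arbitrary ι))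

section Wasserstein

variable {d : ℕ} {μ ν : Measure (Euc d)} [IsProbabilityMeasure μ] [IsProbabilityMeasure ν]

theorem bddAbove_W1_set (hμ : Integrable (fun x : Euc d => ‖x‖) μ)
    (hν : Integrable (fun x : Euc d => ‖x‖) ν) :
    BddAbove {t : ℝ | ∃ φ : Euc d → ℝ, LipschitzWith 1 φ ∧
      t = (∫ x, φ x ∂μ) - ∫ x, φ x ∂ν} := by
  refine ⟨(∫ x, ‖x‖ ∂μ) + ∫ x, ‖x‖ ∂ν, ?_⟩
  rintro _ ⟨φ, hφ, rfl⟩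
  have hφ_le : ∀ x y, φ x ≤ φ y + ‖x - y‖ := fun x y => by
    simpa [dist_eq_norm] using hφ.le_add_mul x y
  have upper : ∫ x, φ x ∂μ ≤ ∫ x, φ 0 + ‖x‖ ∂μ :=
    integral_mono (hφ.integrable_of_integrable_norm hμ) ((integrable_const _).add hμ)
      fun x => by simpa using hφ_le x 0
  have lower : ∫ x, φ 0 - ‖x‖ ∂ν ≤ ∫ x, φ x ∂ν :=
    integral_mono ((integrable_const _).sub hν) (hφ.integrable_of_integrable_norm hν)
      fun x => by simpa [norm_sub_rev] using sub_le_iff_le_add.mpr (hφ_le 0 x)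
  rw [integral_add (integrable_const _) hμ] at upper
  rw [integral_sub (integrable_const _) hν] at lower
  simp only [integral_const, probReal_univ, one_smul] at upper lower
  linarith

theorem W1_nonneg (hμ : Integrable (fun x : Euc d => ‖x‖) μ)
    (hν : Integrable (fun x : Euc d => ‖x‖) ν) : 0 ≤ W1 μ ν :=
  le_csSup (bddAbove_W1_set hμ hν) ⟨0, LipschitzWith.const' 0, by simp⟩

theorem integral_sub_integral_le_mul_W1 (hμ : Integrable (fun x : Euc d => ‖x‖) μ)
    (hν : Integrable (fun x : Euc d => ‖x‖) ν) {φ : Euc d → ℝ} {K : ℝ≥0}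
    (hφ : LipschitzWith K φ) : (∫ x, φ x ∂μ) - ∫ x, φ x ∂ν ≤ K * W1 μ ν := by
  rcases eq_or_ne K 0 with rfl | hK
  · have hconst : ∀ x, φ x = φ 0 := fun x => dist_le_zero.mp (by simpa using hφ.dist_le_mul x 0)
    simp [hconst]
  · have hK' : (0 : ℝ) < K := by positivity
    have hscaled : LipschitzWith 1 fun x => (K : ℝ)⁻¹ * φ x :=
      LipschitzWith.of_dist_le_mul fun x y => by
        rw [Real.dist_eq, ← mul_sub, abs_mul, abs_inv, NNReal.abs_eq, inv_mul_le_iff₀ hK',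
          NNReal.coe_one, one_mul, ← Real.dist_eq]
        exact hφ.dist_le_mul x y
    have := le_csSup (bddAbove_W1_set hμ hν) ⟨_, hscaled, rfl⟩
    rw [integral_const_mul, integral_const_mul, ← mul_sub, inv_mul_le_iff₀ hK'] at this
    exact this

theorem abs_integral_sub_integral_le_mul_W1 (hμ : Integrable (fun x : Euc d => ‖x‖) μ)
    (hν : Integrable (fun x : Euc d => ‖x‖) ν) {φ : Euc d → ℝ} {K : ℝ≥0}
    (hφ : LipschitzWith K φ) : |(∫ x, φ x ∂μ) - ∫ x, φ x ∂ν| ≤ K * W1 μ ν := by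
  rw [abs_sub_le_iff]
  refine ⟨integral_sub_integral_le_mul_W1 hμ hν hφ, ?_⟩
  have := integral_sub_integral_le_mul_W1 hμ hν hφ.neg
  simp only [Pi.neg_apply, integral_neg] at this
  linarith

theorem abs_integral_integral_sub_le_mul_W1 (hμ : Integrable (fun x : Euc d => ‖x‖) μ)
    (hν : Integrable (fun x : Euc d => ‖x‖) ν) {h : Euc d → Euc d → ℝ} {K : ℝ≥0}
    (hleft : ∀ w, LipschitzWith K fun v => h v w) (hright : ∀ v, LipschitzWith K (h v)) :
    |(∫ v, ∫ w, h v w ∂μ ∂μ) - ∫ v, ∫ w, h v w ∂ν ∂ν| ≤ 2 * K * W1 μ ν := by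
  have hΦ : LipschitzWith K fun v => ∫ w, h v w ∂μ := lipschitzWith_integral
    (fun v => (hright v).integrable_of_integrable_norm hμ) hleft
  have hΦν : LipschitzWith K fun v => ∫ w, h v w ∂ν := lipschitzWith_integral
    (fun v => (hright v).integrable_of_integrable_norm hν) hleft
  have change_outer := abs_integral_sub_integral_le_mul_W1 hμ hν hΦ
  have change_inner : |(∫ v, ∫ w, h v w ∂μ ∂ν) - ∫ v, ∫ w, h v w ∂ν ∂ν| ≤ K * W1 μ ν := by
    rw [← integral_sub (hΦ.integrable_of_integrable_norm hν) (hΦν.integrable_of_integrable_norm hν)]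
    simpa using norm_integral_le_of_norm_le_const (μ := ν)
      (f := fun v => ∫ w, h v w ∂μ - ∫ w, h v w ∂ν) (Filter.Eventually.of_forall fun v =>
        (Real.norm_eq_abs _).trans_le (abs_integral_sub_integral_le_mul_W1 hμ hν (hright v)))
  calc _ ≤ |(∫ v, ∫ w, h v w ∂μ ∂μ) - ∫ v, ∫ w, h v w ∂μ ∂ν|
        + |(∫ v, ∫ w, h v w ∂μ ∂ν) - ∫ v, ∫ w, h v w ∂ν ∂ν| := abs_sub_le _ _ _
    _ ≤ 2 * K * W1 μ ν := by linarith

end Wasserstein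

theorem IsCutoff.abs_le_one {A : ℝ} {χA : ℝ → ℝ} (h : IsCutoff A χA) {t : ℝ} (ht : 0 ≤ t) :
    |χA t| ≤ 1 :=
  abs_le.mpr ⟨by linarith [(h.2.1 t ht).1], (h.2.1 t ht).2⟩

theorem lipschitzWith_comp_norm_mul_comp_abs_inner {E : Type*} [NormedAddCommGroup E]
    [InnerProductSpace ℝ E] {a b : ℝ → ℝ} {Ka Kb : ℝ≥0} (ha : LipschitzWith Ka a)
    (hb : LipschitzWith Kb b) (ha₁ : ∀ t, 0 ≤ t → |a t| ≤ 1) (hb₁ : ∀ t, 0 ≤ t → |b t| ≤ 1)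
    {e : E} (he : ‖e‖ ≤ 1) (w : E) :
    LipschitzWith (Ka + Kb) fun v => a ‖v‖ * a ‖w‖ * b |⟪v - w, e⟫| := by
  have hnorm : LipschitzWith Ka fun v : E => a ‖v‖ := mul_one Ka ▸ ha.comp lipschitzWith_one_norm
  have hinner : LipschitzWith Kb fun v : E => b |⟪v - w, e⟫| := by
    refine LipschitzWith.of_dist_le_mul fun v v' => (hb.dist_le_mul _ _).trans ?_
    gcongr
    calc dist |⟪v - w, e⟫| |⟪v' - w, e⟫| ≤ |⟪v - w, e⟫ - ⟪v' - w, e⟫| :=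
          abs_abs_sub_abs_le_abs_sub _ _
      _ = |⟪v - v', e⟫| := by rw [← inner_sub_left, sub_sub_sub_cancel_right]
      _ ≤ ‖v - v'‖ * ‖e‖ := abs_real_inner_le_norm _ _
      _ ≤ dist v v' := by rw [dist_eq_norm]; exact mul_le_of_le_one_right (norm_nonneg _) he
  have hprod : LipschitzWith (Ka + 0) fun v : E => a ‖v‖ * a ‖w‖ :=
    hnorm.mul_of_abs_le_one (LipschitzWith.const' _) (fun v => ha₁ _ (norm_nonneg v))
      fun _ => ha₁ _ (norm_nonneg w)
  have hprod₁ : ∀ v : E, |a ‖v‖ * a ‖w‖| ≤ 1 := fun v => by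
    rw [abs_mul]; exact mul_le_one₀ (ha₁ _ (norm_nonneg v)) (abs_nonneg _) (ha₁ _ (norm_nonneg w))
  simpa using hprod.mul_of_abs_le_one hinner hprod₁ fun v => hb₁ _ (abs_nonneg _)

theorem abs_alphaCut_sub_le {χ : ℝ → ℝ → ℝ} {R δ η : ℝ} {K₁ K₂ K₃ K₄ K₅ : ℝ≥0}
    (h₁ : LipschitzWith K₁ (χ (η^2/2))) (h₂ : LipschitzWith K₂ (χ (4*η)))
    (h₃ : LipschitzWith K₃ (χ R)) (h₄ : LipschitzWith K₄ (χ (2*δ)))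
    (h₅ : LipschitzWith K₅ (χ (R-1)))
    (h₃₁ : ∀ t, 0 ≤ t → |χ R t| ≤ 1) (h₄₁ : ∀ t, 0 ≤ t → |χ (2*δ) t| ≤ 1)
    {f g : Measure (Euc 3)} [IsProbabilityMeasure f] [IsProbabilityMeasure g]
    (hf : Integrable (fun x : Euc 3 => ‖x‖) f) (hg : Integrable (fun x : Euc 3 => ‖x‖) g) :
    |alphaCut χ R δ η f - alphaCut χ R δ η g| ≤ (K₁ * (2 * (K₃ + K₄)) + K₂ * K₅) * W1 f g := by
  have : Nonempty (Metric.sphere (0 : Euc 3) 1) :=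
    (NormedSpace.sphere_nonempty.mpr zero_le_one).to_subtype
  have hsup := abs_ciSup_sub_ciSup_le fun e : Metric.sphere (0 : Euc 3) 1 =>
    abs_integral_integral_sub_le_mul_W1 hf hg
      (fun w => lipschitzWith_comp_norm_mul_comp_abs_inner h₃ h₄ h₃₁ h₄₁
        (norm_eq_of_mem_sphere e).le w)
      fun v => by
        simpa [mul_comm, ← abs_neg (⟪v - _, _⟫), ← inner_neg_left] using
          lipschitzWith_comp_norm_mul_comp_abs_inner h₃ h₄ h₃₁ h₄₁
            (norm_eq_of_mem_sphere e).le v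
  have hmass := abs_integral_sub_integral_le_mul_W1 hf hg
    (mul_one K₅ ▸ h₅.comp lipschitzWith_one_norm : LipschitzWith K₅ fun v : Euc 3 => χ (R-1) ‖v‖)
  have hsup' := (h₁.dist_le_mul _ _).trans (mul_le_mul_of_nonneg_left hsup K₁.2)
  have hmass' := (h₂.dist_le_mul _ _).trans (mul_le_mul_of_nonneg_left hmass K₂.2)
  rw [Real.dist_eq] at hsup' hmass'
  unfold alphaCut
  rw [abs_le] at hsup' hmass' ⊢
  push_cast at hsup' hmass' ⊢
  constructor <;> linarith [hsup'.1, hsup'.2, hmass'.1, hmass'.2]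

theorem stmt_8_general (R δ η : ℝ)
    (χ : ℝ → ℝ → ℝ)
    (hχ1 : IsCutoff (η^2/2) (χ (η^2/2))) (hχ2 : IsCutoff (4*η) (χ (4*η)))
    (hχ3 : IsCutoff R (χ R)) (hχ4 : IsCutoff (2*δ) (χ (2*δ)))
    (hχ5 : IsCutoff (R-1) (χ (R-1))) :
    ∃ C > (0 : ℝ), ∀ f g : Measure (Euc 3),
      IsProbabilityMeasure f → IsProbabilityMeasure g →
      Integrable (fun x : Euc 3 => ‖x‖) f → Integrable (fun x : Euc 3 => ‖x‖) g →
      |alphaCut χ R δ η f - alphaCut χ R δ η g| ≤ C * W1 f g := by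
  obtain ⟨K₁, h₁⟩ := hχ1.1
  obtain ⟨K₂, h₂⟩ := hχ2.1
  obtain ⟨K₃, h₃⟩ := hχ3.1
  obtain ⟨K₄, h₄⟩ := hχ4.1
  obtain ⟨K₅, h₅⟩ := hχ5.1
  refine ⟨K₁ * (2 * (K₃ + K₄)) + K₂ * K₅ + 1, by positivity, fun f g _ _ hf hg => ?_⟩
  refine (abs_alphaCut_sub_le h₁ h₂ h₃ h₄ h₅ (fun _ => hχ3.abs_le_one)
    (fun _ => hχ4.abs_le_one) hf hg).trans ?_
  exact mul_le_mul_of_nonneg_right (by linarith) (W1_nonneg hf hg)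

/-- the functional `α^R_{δ,η}` is Lipschitz for the `W₁` metric on
probability measures with finite first moment. -/
theorem stmt_8 (R δ η : ℝ) (hR : 1 < R) (hδ : δ ∈ Set.Ioo (0 : ℝ) 1)
    (hη : η ∈ Set.Ioo (0 : ℝ) 1)
    (χ : ℝ → ℝ → ℝ)
    (hχ1 : IsCutoff (η^2/2) (χ (η^2/2))) (hχ2 : IsCutoff (4*η) (χ (4*η)))
    (hχ3 : IsCutoff R (χ R)) (hχ4 : IsCutoff (2*δ) (χ (2*δ)))
    (hχ5 : IsCutoff (R-1) (χ (R-1))) :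
    ∃ C > (0 : ℝ), ∀ f g : Measure (Euc 3),
      IsProbabilityMeasure f → IsProbabilityMeasure g →
      Integrable (fun x : Euc 3 => ‖x‖) f → Integrable (fun x : Euc 3 => ‖x‖) g →
      |alphaCut χ R δ η f - alphaCut χ R δ η g| ≤ C * W1 f g :=
  stmt_8_general R δ η χ hχ1 hχ2 hχ3 hχ4 hχ5

end
end

section
/- Let d ≥ 1, ν ∈ (0,2), γ ≤ 0, N ≥ 2 and 1 ≤ k ≤ N. Let G^N be a symmetric probability density on ℝ^{dN} (invariant under permutations of its N coordinates in ℝ^d) and let G^k be its marginal density on the first k coordinates. Then I^k_{ν,γ}(G^k) ≤ I^N_{ν,γ}(G^N). -/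
open MeasureTheory ENNReal

noncomputable section

/-!
For a symmetric density all coordinates carry the same share of the Fisher information, so
`I^N(G^N)` is the single term of any one coordinate, and it suffices to bound the `i`-th term of
the marginal `G^k` by the `i`-th term of `G^N`. After integrating out the last `N - k`
coordinates this is the pointwise inequality `(√(∫ a) - √(∫ b))² ≤ ∫ (√a - √b)²`, the reverse
triangle inequality in `L²` for `√a` and `√b`, applied with `a = ⟨v⟩^γ G^N(…, v, …)` and
`b = ⟨v_*⟩^γ G^N(…, v_*, …)`.
-/

open NNReal

theorem ENNReal.ofReal_sq_toReal_sub_le {x y z : ℝ≥0∞} (hx : x ≤ z + y) (hy : y ≤ z + x) :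
    ENNReal.ofReal ((x.toReal - y.toReal) ^ 2) ≤ z ^ 2 := by
  rcases eq_or_ne z ⊤ with rfl | hz
  · simp
  rcases eq_or_ne x ⊤ with rfl | hxt
  · simp_all
  rcases eq_or_ne y ⊤ with rfl | hyt
  · simp_all
  lift x to ℝ≥0 using hxt
  lift y to ℝ≥0 using hyt
  lift z to ℝ≥0 using hz
  have hx' : (x : ℝ) ≤ z + y := mod_cast hx
  have hy' : (y : ℝ) ≤ z + x := mod_cast hy
  calc ENNReal.ofReal ((x.toReal - y.toReal) ^ 2) ≤ ENNReal.ofReal ((z : ℝ) ^ 2) :=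
        ofReal_le_ofReal (sq_le_sq' (by linarith) (by linarith))
    _ = (z : ℝ≥0∞) ^ 2 := by rw [← NNReal.coe_pow, ofReal_coe_nnreal, ENNReal.coe_pow]

theorem ofReal_sq_sub_sqrt_integral_le {X : Type*} [MeasurableSpace X] {μ : Measure X}
    {a b : X → ℝ} (ha : AEMeasurable a μ) (hb : AEMeasurable b μ)
    (ha0 : ∀ x, 0 ≤ a x) (hb0 : ∀ x, 0 ≤ b x) :
    ENNReal.ofReal ((√(∫ x, a x ∂μ) - √(∫ x, b x ∂μ)) ^ 2)
      ≤ ∫⁻ x, ENNReal.ofReal ((√(a x) - √(b x)) ^ 2) ∂μ := by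
  set L : (X → ℝ≥0∞) → ℝ≥0∞ := fun f => (∫⁻ x, f x ^ (2 : ℝ) ∂μ) ^ (1 / 2 : ℝ) with hL
  -- This also holds for non-integrable `c`: then both sides are junk `0`, with `L = ⊤`.
  have sqrt_integral (c : X → ℝ) (hc : AEMeasurable c μ) (hc0 : ∀ x, 0 ≤ c x) :
      √(∫ x, c x ∂μ) = (L fun x => ENNReal.ofReal √(c x)).toReal := by
    rw [hL, ← ENNReal.toReal_rpow, ← Real.sqrt_eq_rpow,
      integral_eq_lintegral_of_nonneg_ae (ae_of_all _ hc0) hc.aestronglyMeasurable]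
    congr 3 with x
    rw [ENNReal.rpow_two, ← ENNReal.ofReal_pow (Real.sqrt_nonneg _), Real.sq_sqrt (hc0 x)]
  have L_abs_sq : L (fun x => ENNReal.ofReal |√(a x) - √(b x)|) ^ 2
      = ∫⁻ x, ENNReal.ofReal ((√(a x) - √(b x)) ^ 2) ∂μ := by
    rw [hL, ← ENNReal.rpow_natCast, ← ENNReal.rpow_mul,
      show (1 / 2 : ℝ) * ((2 : ℕ) : ℝ) = 1 by norm_num, ENNReal.rpow_one]
    congr 1 with x
    rw [ENNReal.rpow_two, ← ENNReal.ofReal_pow (abs_nonneg _), sq_abs]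
  have minkowski (u v : X → ℝ) (hu : AEMeasurable u μ) (hv : AEMeasurable v μ) :
      L (fun x => ENNReal.ofReal √(u x))
        ≤ L (fun x => ENNReal.ofReal |√(u x) - √(v x)|) + L (fun x => ENNReal.ofReal √(v x)) := by
    refine le_trans ?_ (ENNReal.lintegral_Lp_add_le (by fun_prop) (by fun_prop) one_le_two)
    refine ENNReal.rpow_le_rpow (lintegral_mono fun x => ?_) (by norm_num)
    rw [Pi.add_apply, ← ENNReal.ofReal_add (abs_nonneg _) (Real.sqrt_nonneg _)]
    gcongr
    exact ENNReal.ofReal_le_ofReal (by linarith [le_abs_self (√(u x) - √(v x))])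
  rw [sqrt_integral a ha ha0, sqrt_integral b hb hb0, ← L_abs_sq]
  refine ENNReal.ofReal_sq_toReal_sub_le (minkowski a b ha hb) ?_
  simpa only [abs_sub_comm] using minkowski b a hb ha

theorem Fin.update_append_castAdd {α : Type*} {k m : ℕ} (W : Fin k → α) (U : Fin m → α)
    (i : Fin k) (w : α) :
    Function.update (Fin.append W U) (Fin.castAdd m i) w
      = Fin.append (Function.update W i w) U := by
  ext j
  refine Fin.addCases (fun j => ?_) (fun j => ?_) j
  · simp [Function.update_apply, Fin.castAdd_inj]
  · simp only [Function.update_apply, Fin.ext_iff, Fin.val_natAdd, Fin.val_castAdd,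
      Fin.append_right, ite_eq_right_iff]
    omega

theorem measurePreserving_finAppend (α : Type*) [MeasureSpace α]
    [SigmaFinite (volume : Measure α)] (k m : ℕ) :
    MeasurePreserving (fun p : (Fin k → α) × (Fin m → α) => Fin.append p.1 p.2) := by
  have append_eq : (fun p : (Fin k → α) × (Fin m → α) => Fin.append p.1 p.2)
      = MeasurableEquiv.piCongrLeft (fun _ => α) finSumFinEquiv ∘
        (MeasurableEquiv.sumPiEquivProdPi fun _ : Fin k ⊕ Fin m => α).symm := by
    funext p
    ext j : 1
    refine Fin.addCases (fun j => ?_) (fun j => ?_) j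
    · rw [Fin.append_left, MeasurableEquiv.coe_piCongrLeft,
        MeasurableEquiv.coe_sumPiEquivProdPi_symm, ← finSumFinEquiv_apply_left]
      exact (Equiv.piCongrLeft_sumInl (fun _ => α) finSumFinEquiv p.1 p.2 j).symm
    · rw [Fin.append_right, MeasurableEquiv.coe_piCongrLeft,
        MeasurableEquiv.coe_sumPiEquivProdPi_symm, ← finSumFinEquiv_apply_right]
      exact (Equiv.piCongrLeft_sumInr (fun _ => α) finSumFinEquiv p.1 p.2 j).symm
  rw [append_eq]
  exact (volume_measurePreserving_piCongrLeft _ _).comp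
    (volume_measurePreserving_sumPiEquivProdPi_symm _)

theorem lintegral_finAppend {α : Type*} [MeasureSpace α] [SigmaFinite (volume : Measure α)]
    {k m : ℕ} {f : (Fin (k + m) → α) → ℝ≥0∞} (hf : Measurable f) :
    ∫⁻ V, f V = ∫⁻ W : Fin k → α, ∫⁻ U : Fin m → α, f (Fin.append W U) := by
  rw [← (measurePreserving_finAppend α k m).lintegral_comp hf, Measure.volume_eq_prod]
  exact lintegral_prod _ (hf.comp (measurePreserving_finAppend α k m).measurable).aemeasurable

theorem lintegral_comp_perm {ι α : Type*} [Fintype ι] [MeasureSpace α]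
    [SigmaFinite (volume : Measure α)] (σ : Equiv.Perm ι) (f : (ι → α) → ℝ≥0∞) :
    ∫⁻ V, f (V ∘ σ) = ∫⁻ V, f V :=
  (volume_preserving_arrowCongr' σ.symm (MeasurableEquiv.refl α)
    (MeasurePreserving.id volume)).lintegral_comp_emb (MeasurableEquiv.measurableEmbedding _) f

section FisherInformation

variable (d : ℕ) (ν γ : ℝ)

def fisherIntegrand (x w : Euc d) (s t : ℝ) : ℝ≥0∞ :=
  ENNReal.ofReal ((jap x ^ (γ / 2) * √s - jap w ^ (γ / 2) * √t) ^ 2 / ‖x - w‖ ^ ((d : ℝ) + ν))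

def fisherTerm {n : ℕ} (i : Fin n) (H : (Fin n → Euc d) → ℝ) : ℝ≥0∞ :=
  ∫⁻ V, ∫⁻ w, fisherIntegrand d ν γ (V i) w (H V) (H (Function.update V i w))

theorem fisherInfo_eq_sum_fisherTerm (n : ℕ) (H : (Fin n → Euc d) → ℝ) :
    fisherInfo d n ν γ H = (n : ℝ≥0∞)⁻¹ * ∑ i, fisherTerm d ν γ i H :=
  rfl

variable {d ν γ}

@[fun_prop]
theorem measurable_jap : Measurable (jap (d := d)) := by
  unfold jap; fun_prop

@[fun_prop]
theorem Measurable.fisherIntegrand {Z : Type*} [MeasurableSpace Z] {x w : Z → Euc d}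
    {s t : Z → ℝ} (hx : Measurable x) (hw : Measurable w) (hs : Measurable s)
    (ht : Measurable t) :
    Measurable fun z => fisherIntegrand d ν γ (x z) (w z) (s z) (t z) := by
  unfold _root_.fisherIntegrand; fun_prop

theorem fisherIntegrand_integral_le {Y : Type*} [MeasurableSpace Y] {μ : Measure Y}
    (x w : Euc d) {g h : Y → ℝ} (hg : AEMeasurable g μ) (hh : AEMeasurable h μ)
    (hg0 : ∀ y, 0 ≤ g y) (hh0 : ∀ y, 0 ≤ h y) :
    fisherIntegrand d ν γ x w (∫ y, g y ∂μ) (∫ y, h y ∂μ)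
      ≤ ∫⁻ y, fisherIntegrand d ν γ x w (g y) (h y) ∂μ := by
  have weight_nonneg (z : Euc d) : 0 ≤ jap z ^ (γ / 2) :=
    Real.rpow_nonneg (Real.sqrt_nonneg _) _
  have mul_sqrt (c s : ℝ) (hc : 0 ≤ c) : c * √s = √(c ^ 2 * s) := by
    rw [Real.sqrt_mul (sq_nonneg c), Real.sqrt_sq hc]
  have split (s t : ℝ) : fisherIntegrand d ν γ x w s t
      = ENNReal.ofReal ((√((jap x ^ (γ / 2)) ^ 2 * s) - √((jap w ^ (γ / 2)) ^ 2 * t)) ^ 2)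
        * ENNReal.ofReal (‖x - w‖ ^ ((d : ℝ) + ν))⁻¹ := by
    rw [_root_.fisherIntegrand, div_eq_mul_inv, ENNReal.ofReal_mul (sq_nonneg _),
      mul_sqrt _ _ (weight_nonneg x), mul_sqrt _ _ (weight_nonneg w)]
  simp only [split, ← integral_const_mul]
  rw [lintegral_mul_const' _ _ ENNReal.ofReal_ne_top]
  gcongr
  exact ofReal_sq_sub_sqrt_integral_le (hg.const_mul _) (hh.const_mul _)
    (fun y => mul_nonneg (sq_nonneg _) (hg0 y)) (fun y => mul_nonneg (sq_nonneg _) (hh0 y))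

theorem fisherTerm_eq_of_perm_invariant {n : ℕ} {H : (Fin n → Euc d) → ℝ}
    (hH : ∀ (σ : Equiv.Perm (Fin n)) (V : Fin n → Euc d), H (V ∘ σ) = H V) (i j : Fin n) :
    fisherTerm d ν γ i H = fisherTerm d ν γ j H := by
  classical
  set σ := Equiv.swap i j
  have update_comp (V : Fin n → Euc d) (w : Euc d) :
      Function.update (V ∘ σ) j w = Function.update V i w ∘ σ := by
    rw [Function.update_comp_equiv, Equiv.symm_swap, Equiv.swap_apply_left]
  let slice_j (V : Fin n → Euc d) : ℝ≥0∞ :=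
    ∫⁻ w, fisherIntegrand d ν γ (V j) w (H V) (H (Function.update V j w))
  calc fisherTerm d ν γ i H = ∫⁻ V, slice_j (V ∘ σ) := by
        refine lintegral_congr fun V => lintegral_congr fun w => ?_
        rw [update_comp, hH, hH, Function.comp_apply, Equiv.swap_apply_right]
    _ = ∫⁻ V, slice_j V := lintegral_comp_perm σ slice_j
    _ = fisherTerm d ν γ j H := rfl

theorem fisherInfo_eq_fisherTerm_of_perm_invariant {n : ℕ} {H : (Fin n → Euc d) → ℝ}
    (hH : ∀ (σ : Equiv.Perm (Fin n)) (V : Fin n → Euc d), H (V ∘ σ) = H V) (j : Fin n) :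
    fisherInfo d n ν γ H = fisherTerm d ν γ j H := by
  have hn : (n : ℝ≥0∞) ≠ 0 := by exact_mod_cast j.pos.ne'
  rw [fisherInfo_eq_sum_fisherTerm,
    Finset.sum_congr rfl fun i _ => fisherTerm_eq_of_perm_invariant hH i j, Finset.sum_const,
    Finset.card_univ, Fintype.card_fin, nsmul_eq_mul, ← mul_assoc,
    ENNReal.inv_mul_cancel hn (ENNReal.natCast_ne_top n), one_mul]

theorem fisherInfo_le_of_forall_fisherTerm_le {n : ℕ} {H : (Fin n → Euc d) → ℝ} {c : ℝ≥0∞}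
    (h : ∀ i, fisherTerm d ν γ i H ≤ c) : fisherInfo d n ν γ H ≤ c :=
  calc fisherInfo d n ν γ H ≤ (n : ℝ≥0∞)⁻¹ * ∑ _i : Fin n, c := by
        rw [fisherInfo_eq_sum_fisherTerm]; gcongr with i; exact h i
    _ = ((n : ℝ≥0∞)⁻¹ * n) * c := by simp [mul_assoc]
    _ ≤ c := mul_le_of_le_one_left' (ENNReal.inv_mul_le_one _)

def finMarginal {α : Type*} [MeasureSpace α] {k m : ℕ} (G : (Fin (k + m) → α) → ℝ)
    (W : Fin k → α) : ℝ :=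
  ∫ U : Fin m → α, G (Fin.append W U)

theorem fisherTerm_finMarginal_le {k m : ℕ} {G : (Fin (k + m) → Euc d) → ℝ}
    (hG : Measurable G) (hG0 : ∀ V, 0 ≤ G V) (i : Fin k) :
    fisherTerm d ν γ i (finMarginal G) ≤ fisherTerm d ν γ (Fin.castAdd m i) G := by
  have hF : Measurable (Function.uncurry fun (V : Fin (k + m) → Euc d) (w : Euc d) =>
      fisherIntegrand d ν γ (V (Fin.castAdd m i)) w (G V)
        (G (Function.update V (Fin.castAdd m i) w))) := by
    fun_prop
  have happend (W : Fin k → Euc d) : Measurable fun U : Fin m → Euc d => Fin.append W U := by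
    fun_prop
  conv_rhs => rw [fisherTerm, lintegral_finAppend hF.lintegral_prod_right]
  refine lintegral_mono fun W => ?_
  rw [lintegral_lintegral_swap]
  swap
  · exact (hF.comp ((happend W).prodMap measurable_id)).aemeasurable
  refine lintegral_mono fun w => ?_
  simp only [Fin.append_left, Fin.update_append_castAdd]
  exact fisherIntegrand_integral_le _ _ (hG.comp (happend W)).aemeasurable
    (hG.comp (happend _)).aemeasurable (fun _ => hG0 _) (fun _ => hG0 _)

end FisherInformation

theorem stmt_13_general (d : ℕ) (ν γ : ℝ) (k m : ℕ)
    (G : (Fin (k+m) → Euc d) → ℝ) (hG : IsSymDensity d (k+m) G) :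
    fisherInfo d k ν γ (fun W => ∫ U : Fin m → Euc d, G (Fin.append W U))
      ≤ fisherInfo d (k+m) ν γ G := by
  obtain ⟨⟨hG_meas, hG_nonneg, -⟩, hG_symm⟩ := hG
  refine fisherInfo_le_of_forall_fisherTerm_le fun i => ?_
  rw [fisherInfo_eq_fisherTerm_of_perm_invariant hG_symm (Fin.castAdd m i)]
  exact fisherTerm_finMarginal_le hG_meas hG_nonneg i

/-- monotonicity of the Fisher information under marginals of symmetric
densities: `I^k_{ν,γ}(G^k) ≤ I^N_{ν,γ}(G^N)` for `1 ≤ k ≤ N` (here `N = k + m`). -/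
theorem stmt_13 (d : ℕ) (hd : 1 ≤ d) (ν γ : ℝ)
    (hν : ν ∈ Set.Ioo (0 : ℝ) 2) (hγ : γ ≤ 0)
    (k m : ℕ) (hk : 1 ≤ k) (hN : 2 ≤ k + m)
    (G : (Fin (k+m) → Euc d) → ℝ) (hG : IsSymDensity d (k+m) G) :
    fisherInfo d k ν γ (fun W => ∫ U : Fin m → Euc d, G (Fin.append W U))
      ≤ fisherInfo d (k+m) ν γ G :=
  stmt_13_general d ν γ k m G hG

end
end

section
/- For every d ≥ 1, ν ∈ (0,2) and all measurable functions g, h : ℝ^d → ℝ, the following inequalities hold, with all integrals understood in [0,∞]: (1/2) ∫∫_{ℝ^{2d}} h²(x) (g(x)−g(y))² / |x−y|^{d+ν} dx dy − 4 ∫∫_{ℝ^{2d}} g²(x) (h(x)−h(y))² / |x−y|^{d+ν} dx dy ≤ |hg|²_{H^{ν/2}(ℝ^d)} ≤ 2 ∫∫_{ℝ^{2d}} h²(x) (g(x)−g(y))² / |x−y|^{d+ν} dx dy + 2 ∫∫_{ℝ^{2d}} g²(x) (h(x)−h(y))² / |x−y|^{d+ν} dx dy. -/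
open MeasureTheory ENNReal

noncomputable section

/-! For real `a, b, c` the bound `(a + b)² / c ≤ 2 a² / c + 2 b² / c` lifts to the double integrals;
writing `h(x)g(x) - h(y)g(y) = h(x)(g(x) - g(y)) + g(y)(h(x) - h(y))` gives the upper bound, and
`h(x)(g(x) - g(y)) = (h(x)g(x) - h(y)g(y)) - g(y)(h(x) - h(y))` gives, after halving, the lower one.
The factor `g(y)²` is moved to `g(x)²` by exchanging `x` and `y`, which needs a symmetric kernel. -/

theorem ENNReal.ofReal_sq_add_div_le (a b c : ℝ) :
    ENNReal.ofReal ((a + b) ^ 2 / c) ≤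
      2 * ENNReal.ofReal (a ^ 2 / c) + 2 * ENNReal.ofReal (b ^ 2 / c) := by
  rcases le_or_gt c 0 with hc | hc
  · simp [ENNReal.ofReal_of_nonpos (div_nonpos_of_nonneg_of_nonpos (sq_nonneg _) hc)]
  have hreal : (a + b) ^ 2 / c ≤ 2 * (a ^ 2 / c) + 2 * (b ^ 2 / c) := by
    rw [mul_div_assoc', mul_div_assoc', ← add_div]
    gcongr
    nlinarith [sq_nonneg (a - b)]
  calc ENNReal.ofReal ((a + b) ^ 2 / c) ≤ ENNReal.ofReal (2 * (a ^ 2 / c) + 2 * (b ^ 2 / c)) :=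
        ENNReal.ofReal_le_ofReal hreal
    _ = 2 * ENNReal.ofReal (a ^ 2 / c) + 2 * ENNReal.ofReal (b ^ 2 / c) := by
        rw [ENNReal.ofReal_add (by positivity) (by positivity), ENNReal.ofReal_mul zero_le_two,
          ENNReal.ofReal_mul zero_le_two, ENNReal.ofReal_ofNat]

theorem ENNReal.half_mul_sub_four_mul_le {a b s : ℝ≥0∞} (h : a ≤ 2 * s + 2 * b) :
    1 / 2 * a - 4 * b ≤ s := by
  have hhalf : 1 / 2 * a ≤ s + b :=
    calc 1 / 2 * a ≤ 1 / 2 * (2 * s + 2 * b) := by gcongr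
      _ = s + b := by
        rw [mul_add, ← mul_assoc, ← mul_assoc, one_div,
          ENNReal.inv_mul_cancel two_ne_zero ofNat_ne_top, one_mul, one_mul]
  calc 1 / 2 * a - 4 * b ≤ 1 / 2 * a - b :=
        tsub_le_tsub_left (le_mul_of_one_le_left' (by norm_num)) _
    _ ≤ s := tsub_le_iff_right.mpr hhalf

namespace MeasureTheory

theorem lintegral_lintegral_le_two_mul_add {α β : Type*} [MeasurableSpace α] [MeasurableSpace β]
    {μ : Measure α} {ν : Measure β} [SFinite ν] {u v w : α → β → ℝ≥0∞}
    (hv : Measurable (Function.uncurry v)) (hw : Measurable (Function.uncurry w))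
    (huvw : ∀ x y, u x y ≤ 2 * v x y + 2 * w x y) :
    ∫⁻ x, ∫⁻ y, u x y ∂ν ∂μ ≤ 2 * ∫⁻ x, ∫⁻ y, v x y ∂ν ∂μ + 2 * ∫⁻ x, ∫⁻ y, w x y ∂ν ∂μ := by
  have hvx (x : α) : Measurable (v x) := hv.comp measurable_prodMk_left
  have hwx (x : α) : Measurable (w x) := hw.comp measurable_prodMk_left
  calc ∫⁻ x, ∫⁻ y, u x y ∂ν ∂μ ≤ ∫⁻ x, ∫⁻ y, 2 * v x y + 2 * w x y ∂ν ∂μ := by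
        gcongr with x y
        exact huvw x y
    _ = ∫⁻ x, 2 * ∫⁻ y, v x y ∂ν + 2 * ∫⁻ y, w x y ∂ν ∂μ := by
        refine lintegral_congr fun x => ?_
        rw [lintegral_add_left ((hvx x).const_mul 2), lintegral_const_mul 2 (hvx x),
          lintegral_const_mul 2 (hwx x)]
    _ = 2 * ∫⁻ x, ∫⁻ y, v x y ∂ν ∂μ + 2 * ∫⁻ x, ∫⁻ y, w x y ∂ν ∂μ := by
        rw [lintegral_add_left (hv.lintegral_prod_right.const_mul 2),
          lintegral_const_mul 2 hv.lintegral_prod_right,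
          lintegral_const_mul 2 hw.lintegral_prod_right]

section SymmetricKernel

variable {α : Type*} [MeasurableSpace α] {μ : Measure α} [SFinite μ] {c : α → α → ℝ}

theorem lintegral_lintegral_sq_mul_div_swap (hc : Measurable (Function.uncurry c))
    (hc_symm : ∀ x y, c x y = c y x) {u f : α → ℝ} (hu : Measurable u) (hf : Measurable f) :
    ∫⁻ x, ∫⁻ y, ENNReal.ofReal (u y ^ 2 * (f x - f y) ^ 2 / c x y) ∂μ ∂μ =
      ∫⁻ x, ∫⁻ y, ENNReal.ofReal (u x ^ 2 * (f x - f y) ^ 2 / c x y) ∂μ ∂μ := by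
  rw [lintegral_lintegral_swap (by fun_prop)]
  refine lintegral_congr fun x => lintegral_congr fun y => ?_
  rw [hc_symm y x, ← neg_sub (f x) (f y), neg_sq]

theorem lintegral_lintegral_sq_mul_sub_div_le (hc : Measurable (Function.uncurry c))
    (hc_symm : ∀ x y, c x y = c y x) {g h : α → ℝ} (hg : Measurable g) (hh : Measurable h) :
    ∫⁻ x, ∫⁻ y, ENNReal.ofReal ((h x * g x - h y * g y) ^ 2 / c x y) ∂μ ∂μ ≤
      2 * ∫⁻ x, ∫⁻ y, ENNReal.ofReal (h x ^ 2 * (g x - g y) ^ 2 / c x y) ∂μ ∂μ +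
        2 * ∫⁻ x, ∫⁻ y, ENNReal.ofReal (g x ^ 2 * (h x - h y) ^ 2 / c x y) ∂μ ∂μ := by
  rw [← lintegral_lintegral_sq_mul_div_swap hc hc_symm hg hh]
  refine lintegral_lintegral_le_two_mul_add (by fun_prop) (by fun_prop) fun x y => ?_
  convert ENNReal.ofReal_sq_add_div_le (h x * (g x - g y)) (g y * (h x - h y)) (c x y) using 5 <;>
    ring

theorem lintegral_lintegral_sq_mul_div_le (hc : Measurable (Function.uncurry c))
    (hc_symm : ∀ x y, c x y = c y x) {g h : α → ℝ} (hg : Measurable g) (hh : Measurable h) :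
    ∫⁻ x, ∫⁻ y, ENNReal.ofReal (h x ^ 2 * (g x - g y) ^ 2 / c x y) ∂μ ∂μ ≤
      2 * ∫⁻ x, ∫⁻ y, ENNReal.ofReal ((h x * g x - h y * g y) ^ 2 / c x y) ∂μ ∂μ +
        2 * ∫⁻ x, ∫⁻ y, ENNReal.ofReal (g x ^ 2 * (h x - h y) ^ 2 / c x y) ∂μ ∂μ := by
  rw [← lintegral_lintegral_sq_mul_div_swap hc hc_symm hg hh]
  refine lintegral_lintegral_le_two_mul_add (by fun_prop) (by fun_prop) fun x y => ?_
  convert ENNReal.ofReal_sq_add_div_le (h x * g x - h y * g y) (-(g y * (h x - h y))) (c x y)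
    using 5 <;> ring

end SymmetricKernel

end MeasureTheory

theorem stmt_16_general (d : ℕ) (ν : ℝ)
    (g h : Euc d → ℝ) (hg : Measurable g) (hh : Measurable h) :
    (1/2 : ℝ≥0∞) * (∫⁻ x : Euc d, ∫⁻ y : Euc d,
          ENNReal.ofReal ((h x)^2 * (g x - g y)^2 / ‖x - y‖ ^ ((d : ℝ) + ν)))
        - 4 * (∫⁻ x : Euc d, ∫⁻ y : Euc d,
          ENNReal.ofReal ((g x)^2 * (h x - h y)^2 / ‖x - y‖ ^ ((d : ℝ) + ν)))
      ≤ fracSobolevSq d (ν/2) (fun x => h x * g x)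
    ∧ fracSobolevSq d (ν/2) (fun x => h x * g x)
      ≤ 2 * (∫⁻ x : Euc d, ∫⁻ y : Euc d,
          ENNReal.ofReal ((h x)^2 * (g x - g y)^2 / ‖x - y‖ ^ ((d : ℝ) + ν)))
        + 2 * (∫⁻ x : Euc d, ∫⁻ y : Euc d,
          ENNReal.ofReal ((g x)^2 * (h x - h y)^2 / ‖x - y‖ ^ ((d : ℝ) + ν))) := by
  have hc : Measurable (Function.uncurry fun x y : Euc d => ‖x - y‖ ^ ((d : ℝ) + ν)) := by
    fun_prop
  have hc_symm (x y : Euc d) : ‖x - y‖ ^ ((d : ℝ) + ν) = ‖y - x‖ ^ ((d : ℝ) + ν) := by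
    rw [norm_sub_rev]
  have hS : fracSobolevSq d (ν/2) (fun x => h x * g x) = ∫⁻ x : Euc d, ∫⁻ y : Euc d,
      ENNReal.ofReal ((h x * g x - h y * g y) ^ 2 / ‖x - y‖ ^ ((d : ℝ) + ν)) := by
    rw [fracSobolevSq, mul_div_cancel₀ ν two_ne_zero]
  rw [hS]
  exact ⟨ENNReal.half_mul_sub_four_mul_le (lintegral_lintegral_sq_mul_div_le hc hc_symm hg hh),
    lintegral_lintegral_sq_mul_sub_div_le hc hc_symm hg hh⟩

/-- fractional Leibniz-type bounds: for measurable `g, h : ℝ^d → ℝ`,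
`(1/2)∫∫ h(x)²(g(x)-g(y))²/|x-y|^{d+ν} - 4∫∫ g(x)²(h(x)-h(y))²/|x-y|^{d+ν}
  ≤ |hg|²_{H^{ν/2}} ≤ 2∫∫ h(x)²(g(x)-g(y))²/|x-y|^{d+ν} + 2∫∫ g(x)²(h(x)-h(y))²/|x-y|^{d+ν}`. -/
theorem stmt_16 (d : ℕ) (hd : 1 ≤ d) (ν : ℝ) (hν : ν ∈ Set.Ioo (0 : ℝ) 2)
    (g h : Euc d → ℝ) (hg : Measurable g) (hh : Measurable h) :
    (1/2 : ℝ≥0∞) * (∫⁻ x : Euc d, ∫⁻ y : Euc d,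
          ENNReal.ofReal ((h x)^2 * (g x - g y)^2 / ‖x - y‖ ^ ((d : ℝ) + ν)))
        - 4 * (∫⁻ x : Euc d, ∫⁻ y : Euc d,
          ENNReal.ofReal ((g x)^2 * (h x - h y)^2 / ‖x - y‖ ^ ((d : ℝ) + ν)))
      ≤ fracSobolevSq d (ν/2) (fun x => h x * g x)
    ∧ fracSobolevSq d (ν/2) (fun x => h x * g x)
      ≤ 2 * (∫⁻ x : Euc d, ∫⁻ y : Euc d,
          ENNReal.ofReal ((h x)^2 * (g x - g y)^2 / ‖x - y‖ ^ ((d : ℝ) + ν)))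
        + 2 * (∫⁻ x : Euc d, ∫⁻ y : Euc d,
          ENNReal.ofReal ((g x)^2 * (h x - h y)^2 / ‖x - y‖ ^ ((d : ℝ) + ν))) :=
  stmt_16_general d ν g h hg hh

end
end
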